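/- (Shift lemma for doubly-robust weights.) Under the support assumption, for any n ≥ 0 and any bounded function q : S×A → ℝ, E_{τ∼p_{π_b}}[Σ_{t=1}^{∞} w(t,n) γ^{t−1} q(S_t,A_t)] = E_{τ∼p_{π_b}}[Σ_{t=1}^{∞} w(t−1,n) γ^{t−1} Σ_{a∈A} π_e(a|S_t) q(S_t,a)], where w(t,n) := (d^{π_e}(S_{t−n},A_{t−n})/d^{π_b}(S_{t−n},A_{t−n})) · Π_{j=0}^{n−1} ρ_{t−j} if t > n, w(t,n) := ρ_{1:t} if 1 ≤ t ≤ n, and w(0,n) := 1; all distribution ratios are well defined p_{π_b}-almost surely and both series converge absolutely in expectation. -/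

import Mathlib

open Finset

variable {S A : Type*} [Fintype S] [Fintype A] [DecidableEq S] [DecidableEq A]
  [Inhabited S] [Inhabited A]

/-- Weight contributed by the `t`-th step of trajectory `τ` under initial
distribution `d1`, transition kernel `T` and policy `π` (`π s a = π(a|s)`,
`T s a s' = T(s'|s,a)`). -/
noncomputable def stepW (d1 : S → ℝ) (T : S → A → S → ℝ) (π : S → A → ℝ)
    (τ : ℕ → S × A) : ℕ → ℝ
  | 0 => d1 (τ 0).1 * π (τ 0).1 (τ 0).2
  | t + 1 => T (τ t).1 (τ t).2 (τ (t + 1)).1 * π (τ (t + 1)).1 (τ (t + 1)).2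

/-- Probability under `p_π` of the first `n` steps (times `0, …, n-1`) of `τ`. -/
noncomputable def preP (d1 : S → ℝ) (T : S → A → S → ℝ) (π : S → A → ℝ)
    (n : ℕ) (τ : ℕ → S × A) : ℝ :=
  ∏ t ∈ range n, stepW d1 T π τ t

/-- Extension of a length-`n` prefix to an infinite trajectory. -/
def extTraj {n : ℕ} (σ : Fin n → S × A) : ℕ → S × A :=
  fun t => if h : t < n then σ ⟨t, h⟩ else default

/-- Expectation under `p_π` of a function depending only on the first `n` steps
of the trajectory. -/
noncomputable def expVal (d1 : S → ℝ) (T : S → A → S → ℝ) (π : S → A → ℝ)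
    (n : ℕ) (f : (ℕ → S × A) → ℝ) : ℝ :=
  ∑ σ : Fin n → S × A, preP d1 T π n (extTraj σ) * f (extTraj σ)

/-- `d_t^π(s,a)`, the time-`t` state-action distribution (time is 0-indexed,
so `t = 0` is the paper's time `1`). -/
noncomputable def dSA (d1 : S → ℝ) (T : S → A → S → ℝ) (π : S → A → ℝ)
    (t : ℕ) (s : S) (a : A) : ℝ :=
  expVal d1 T π (t + 1) (fun τ => if τ t = (s, a) then 1 else 0)

/-- Single-step likelihood ratio `ρ_t = π_e(A_t|S_t)/π_b(A_t|S_t)`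
(0-indexed time). -/
noncomputable def rho (πb πe : S → A → ℝ) (τ : ℕ → S × A) (t : ℕ) : ℝ :=
  πe (τ t).1 (τ t).2 / πb (τ t).1 (τ t).2

/-- Conditional expectation under `p_π` given `(S_t, A_t) = (s, a)`, for a
function of the first `n` steps. -/
noncomputable def condExpSA (d1 : S → ℝ) (T : S → A → S → ℝ) (π : S → A → ℝ)
    (n t : ℕ) (s : S) (a : A) (f : (ℕ → S × A) → ℝ) : ℝ :=
  expVal d1 T π n (fun τ => if τ t = (s, a) then f τ else 0) / dSA d1 T π t s a

/-- Averaged state-action distribution `d_{1:Th}^π` over the first `Th` steps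
with discount `γ`. -/
noncomputable def dAvg (d1 : S → ℝ) (T : S → A → S → ℝ) (π : S → A → ℝ)
    (γ : ℝ) (Th : ℕ) (s : S) (a : A) : ℝ :=
  (∑ t ∈ range Th, γ ^ t * dSA d1 T π t s a) / (∑ t ∈ range Th, γ ^ t)

/-- Discounted average state-action occupancy `d^π` (infinite horizon),
`d^π(s,a) = (1-γ) Σ_{t≥1} γ^{t-1} d_t^π(s,a)`. -/
noncomputable def dInf (d1 : S → ℝ) (T : S → A → S → ℝ) (π : S → A → ℝ)
    (γ : ℝ) (s : S) (a : A) : ℝ :=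
  (1 - γ) * ∑' t : ℕ, γ ^ t * dSA d1 T π t s a

/-- Infinite-horizon value `J(π) = E_{p_π}[Σ_{t≥1} γ^{t-1} R_t]`. -/
noncomputable def Jinf (d1 : S → ℝ) (T : S → A → S → ℝ) (π : S → A → ℝ)
    (r : S → A → ℝ) (γ : ℝ) : ℝ :=
  ∑' t : ℕ, γ ^ t * expVal d1 T π (t + 1) (fun τ => r (τ t).1 (τ t).2)

/-- Doubly-robust weight `w(m, n)` of the paper (`m` is the paper's 1-indexed
time, with `w(0, n) = 1`). -/
noncomputable def wDR (d1 : S → ℝ) (T : S → A → S → ℝ) (πb πe : S → A → ℝ)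
    (γ : ℝ) (n : ℕ) (τ : ℕ → S × A) (m : ℕ) : ℝ :=
  if m = 0 then 1
  else if m ≤ n then ∏ j ∈ range m, rho πb πe τ j
  else (dInf d1 T πe γ (τ (m - n - 1)).1 (τ (m - n - 1)).2 /
        dInf d1 T πb γ (τ (m - n - 1)).1 (τ (m - n - 1)).2) *
      ∏ j ∈ Icc (m - n) (m - 1), rho πb πe τ j

/-!
Under `p_{π_b}` the action `A_t` is drawn from `π_b(·|S_t)` given the past, so against any weight
depending only on the past, `Σ_a π_e(a|S_t) q(S_t,a)` may be replaced by `ρ_t q(S_t,A_t)`;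
integrating out the whole step `t` turns `ρ_t q(S_t,A_t)` into `(P q)(S_{t-1},A_{t-1})`, where
`P = transOp T π_e` is the transition operator of `π_e`. Hence the terms with `t ≤ n` of the two
series agree. For `t > n` the left term becomes `E_{d_{t-n}^{π_b}}[(d^{π_e}/d^{π_b}) P^n q]`; the
right term becomes `E_{d_1^{π_e}}[P^n q]` for `t = n + 1` and
`E_{d_{t-n-1}^{π_b}}[(d^{π_e}/d^{π_b}) P^{n+1} q]` for `t > n + 1`. Since `d_t^{π_b}(s,a) = 0`
forces `d_t^{π_e}(s,a) = 0`, the ratio turns discounted sums over `d_t^{π_b}` into sums over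
`d_t^{π_e}`, and the two tails agree by the flow identity
`Σ_t γ^{t-1} E_{d_t^{π_e}} f = E_{d_1^{π_e}} f + γ Σ_t γ^{t-1} E_{d_t^{π_e}} (P f)`.
-/

noncomputable def actionAvg (π : S → A → ℝ) (f : S → A → ℝ) (s : S) : ℝ :=
  ∑ a, π s a * f s a

noncomputable def transOp (T : S → A → S → ℝ) (π : S → A → ℝ) (f : S → A → ℝ) :
    S → A → ℝ :=
  fun s a => ∑ s', T s a s' * actionAvg π f s'

def DependsOnFirst (m : ℕ) (F : (ℕ → S × A) → ℝ) : Prop :=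
  ∀ τ τ', (∀ u < m, τ u = τ' u) → F τ = F τ'

set_option linter.unusedSectionVars false

section Policies

variable {T : S → A → S → ℝ} {π πb πe : S → A → ℝ}

lemma mul_div_cancel_of_support (hπe : ∀ s a, 0 ≤ πe s a)
    (hsupp : ∀ s a, 0 < πe s a → 0 < πb s a) (s : S) (a : A) :
    πb s a * (πe s a / πb s a) = πe s a := by
  rcases eq_or_ne (πb s a) 0 with h | h
  · have : πe s a = 0 := le_antisymm (not_lt.mp fun hpos => (hsupp s a hpos).ne' h) (hπe s a)
    rw [h, this, zero_div, mul_zero]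
  · exact mul_div_cancel₀ _ h

lemma actionAvg_ratio_mul (hπe : ∀ s a, 0 ≤ πe s a)
    (hsupp : ∀ s a, 0 < πe s a → 0 < πb s a) (q : S → A → ℝ) :
    actionAvg πb (fun s a => πe s a / πb s a * q s a) = actionAvg πe q := by
  funext s
  simp only [actionAvg, ← mul_assoc, mul_div_cancel_of_support hπe hsupp]

lemma actionAvg_const (hπsum : ∀ s, ∑ a, π s a = 1) (g : S → ℝ) :
    actionAvg π (fun s _ => g s) = g := by
  funext s
  rw [actionAvg, ← sum_mul, hπsum, one_mul]

lemma transOp_ratio_mul (hπe : ∀ s a, 0 ≤ πe s a)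
    (hsupp : ∀ s a, 0 < πe s a → 0 < πb s a) (q : S → A → ℝ) :
    transOp T πb (fun s a => πe s a / πb s a * q s a) = transOp T πe q := by
  unfold transOp
  rw [actionAvg_ratio_mul hπe hsupp]

end Policies

section Trajectories

variable {d1 : S → ℝ} {T : S → A → S → ℝ} {π : S → A → ℝ}

lemma extTraj_snoc_of_lt {m : ℕ} (σ : Fin m → S × A) (p : S × A) {t : ℕ} (ht : t < m) :
    extTraj (Fin.snoc σ p) t = extTraj σ t := by
  simp [extTraj, ht, Nat.lt_succ_of_lt ht, Fin.snoc]

lemma extTraj_snoc_self {m : ℕ} (σ : Fin m → S × A) (p : S × A) :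
    extTraj (Fin.snoc σ p) m = p := by
  simp [extTraj, Fin.snoc]

lemma stepW_congr {τ τ' : ℕ → S × A} {t : ℕ} (h : ∀ u ≤ t, τ u = τ' u) :
    stepW d1 T π τ t = stepW d1 T π τ' t := by
  cases t with
  | zero => simp [stepW, h 0 le_rfl]
  | succ t => simp [stepW, h t (Nat.le_succ t), h (t + 1) le_rfl]

lemma preP_congr {m : ℕ} {τ τ' : ℕ → S × A} (h : ∀ u < m, τ u = τ' u) :
    preP d1 T π m τ = preP d1 T π m τ' :=
  prod_congr rfl fun _ ht => stepW_congr fun u hu => h u (hu.trans_lt (mem_range.mp ht))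

lemma expVal_succ (m : ℕ) (f : (ℕ → S × A) → ℝ) :
    expVal d1 T π (m + 1) f =
      ∑ σ : Fin m → S × A, preP d1 T π m (extTraj σ) *
        ∑ p : S × A, stepW d1 T π (extTraj (Fin.snoc σ p)) m *
          f (extTraj (Fin.snoc σ p)) := by
  rw [expVal, ← (Fin.snocEquiv fun _ => S × A).sum_comp, Fintype.sum_prod_type, sum_comm]
  refine sum_congr rfl fun σ _ => ?_
  rw [mul_sum]
  refine sum_congr rfl fun p _ => ?_
  change preP d1 T π (m + 1) (extTraj (Fin.snoc σ p)) * f (extTraj (Fin.snoc σ p)) = _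
  rw [preP, prod_range_succ, ← preP,
    preP_congr (τ' := extTraj σ) fun u hu => extTraj_snoc_of_lt σ p hu]
  ring

lemma exists_stepW_snoc_eq {m : ℕ} (σ : Fin m → S × A) :
    ∃ w : S → ℝ, ∀ p : S × A,
      stepW d1 T π (extTraj (Fin.snoc σ p)) m = w p.1 * π p.1 p.2 := by
  cases m with
  | zero => exact ⟨d1, fun p => by simp only [stepW, extTraj_snoc_self]⟩
  | succ m =>
    exact ⟨T (extTraj σ m).1 (extTraj σ m).2, fun p => by
      simp only [stepW, extTraj_snoc_self, extTraj_snoc_of_lt σ p (Nat.lt_succ_self m)]⟩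

lemma stepW_nonneg (hd1 : ∀ s, 0 ≤ d1 s) (hT : ∀ s a s', 0 ≤ T s a s')
    (hπ : ∀ s a, 0 ≤ π s a) (τ : ℕ → S × A) (t : ℕ) : 0 ≤ stepW d1 T π τ t := by
  cases t with
  | zero => exact mul_nonneg (hd1 _) (hπ _ _)
  | succ t => exact mul_nonneg (hT _ _ _) (hπ _ _)

lemma preP_nonneg (hd1 : ∀ s, 0 ≤ d1 s) (hT : ∀ s a s', 0 ≤ T s a s')
    (hπ : ∀ s a, 0 ≤ π s a) (m : ℕ) (τ : ℕ → S × A) : 0 ≤ preP d1 T π m τ :=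
  prod_nonneg fun t _ => stepW_nonneg hd1 hT hπ τ t

lemma sum_stepW_snoc (hd1sum : ∑ s, d1 s = 1) (hTsum : ∀ s a, ∑ s', T s a s' = 1)
    (hπsum : ∀ s, ∑ a, π s a = 1) {m : ℕ} (σ : Fin m → S × A) :
    ∑ p : S × A, stepW d1 T π (extTraj (Fin.snoc σ p)) m = 1 := by
  cases m with
  | zero =>
    simp only [stepW, extTraj_snoc_self, Fintype.sum_prod_type, ← mul_sum, hπsum, mul_one,
      hd1sum]
  | succ m =>
    simp only [stepW, extTraj_snoc_self, extTraj_snoc_of_lt σ _ (Nat.lt_succ_self m),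
      Fintype.sum_prod_type, ← mul_sum, hπsum, mul_one, hTsum]

lemma expVal_const (hd1sum : ∑ s, d1 s = 1) (hTsum : ∀ s a, ∑ s', T s a s' = 1)
    (hπsum : ∀ s, ∑ a, π s a = 1) (m : ℕ) (c : ℝ) :
    expVal d1 T π m (fun _ => c) = c := by
  induction m with
  | zero => simp [expVal, preP]
  | succ m ih =>
    have hlast (σ : Fin m → S × A) :
        ∑ p : S × A, stepW d1 T π (extTraj (Fin.snoc σ p)) m * c = c := by
      rw [← sum_mul, sum_stepW_snoc hd1sum hTsum hπsum, one_mul]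
    simp only [expVal_succ, hlast]
    exact ih

lemma expVal_nonneg (hd1 : ∀ s, 0 ≤ d1 s) (hT : ∀ s a s', 0 ≤ T s a s')
    (hπ : ∀ s a, 0 ≤ π s a) {m : ℕ} {f : (ℕ → S × A) → ℝ} (hf : ∀ τ, 0 ≤ f τ) :
    0 ≤ expVal d1 T π m f :=
  sum_nonneg fun _ _ => mul_nonneg (preP_nonneg hd1 hT hπ _ _) (hf _)

lemma abs_expVal_le (hd1 : ∀ s, 0 ≤ d1 s) (hd1sum : ∑ s, d1 s = 1)
    (hT : ∀ s a s', 0 ≤ T s a s') (hTsum : ∀ s a, ∑ s', T s a s' = 1)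
    (hπ : ∀ s a, 0 ≤ π s a) (hπsum : ∀ s, ∑ a, π s a = 1)
    {m : ℕ} {f : (ℕ → S × A) → ℝ} {C : ℝ} (hC : ∀ τ, |f τ| ≤ C) :
    |expVal d1 T π m f| ≤ C := by
  calc |expVal d1 T π m f|
      ≤ ∑ σ : Fin m → S × A, |preP d1 T π m (extTraj σ) * f (extTraj σ)| :=
        abs_sum_le_sum_abs _ _
    _ ≤ expVal d1 T π m (fun _ => C) := by
        refine sum_le_sum fun σ _ => ?_
        rw [abs_mul, abs_of_nonneg (preP_nonneg hd1 hT hπ m _)]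
        exact mul_le_mul_of_nonneg_left (hC _) (preP_nonneg hd1 hT hπ m _)
    _ = C := expVal_const hd1sum hTsum hπsum m C

lemma expVal_apply (m : ℕ) (f : S → A → ℝ) :
    expVal d1 T π (m + 1) (fun τ => f (τ m).1 (τ m).2) =
      ∑ p : S × A, dSA d1 T π m p.1 p.2 * f p.1 p.2 := by
  simp only [dSA, expVal, sum_mul, mul_assoc, ite_mul, one_mul, zero_mul]
  rw [sum_comm]
  simp

lemma dSA_zero (s : S) (a : A) : dSA d1 T π 0 s a = d1 s * π s a := by
  rw [dSA, expVal_succ, Fintype.sum_unique]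
  simp [preP, stepW, extTraj_snoc_self]

lemma dSA_nonneg (hd1 : ∀ s, 0 ≤ d1 s) (hT : ∀ s a s', 0 ≤ T s a s')
    (hπ : ∀ s a, 0 ≤ π s a) (m : ℕ) (s : S) (a : A) : 0 ≤ dSA d1 T π m s a :=
  expVal_nonneg hd1 hT hπ fun _ => by split <;> norm_num

lemma abs_dSA_le_one (hd1 : ∀ s, 0 ≤ d1 s) (hd1sum : ∑ s, d1 s = 1)
    (hT : ∀ s a s', 0 ≤ T s a s') (hTsum : ∀ s a, ∑ s', T s a s' = 1)
    (hπ : ∀ s a, 0 ≤ π s a) (hπsum : ∀ s, ∑ a, π s a = 1) (m : ℕ) (s : S) (a : A) :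
    |dSA d1 T π m s a| ≤ 1 :=
  abs_expVal_le hd1 hd1sum hT hTsum hπ hπsum fun _ => by split <;> norm_num

end Trajectories

section Markov

variable {d1 : S → ℝ} {T : S → A → S → ℝ} {π : S → A → ℝ}

lemma expVal_mul_apply_congr {m : ℕ} {F : (ℕ → S × A) → ℝ}
    (hF : DependsOnFirst m F) {h h' : S → A → ℝ}
    (hh : actionAvg π h = actionAvg π h') :
    expVal d1 T π (m + 1) (fun τ => F τ * h (τ m).1 (τ m).2) =
      expVal d1 T π (m + 1) (fun τ => F τ * h' (τ m).1 (τ m).2) := by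
  rw [expVal_succ, expVal_succ]
  refine sum_congr rfl fun σ _ => congrArg _ ?_
  obtain ⟨w, hw⟩ := exists_stepW_snoc_eq (d1 := d1) (T := T) (π := π) σ
  have hFσ (p : S × A) : F (extTraj (Fin.snoc σ p)) = F (extTraj σ) :=
    hF _ _ fun u hu => extTraj_snoc_of_lt σ p hu
  have hsum (g : S → A → ℝ) : ∑ p : S × A, w p.1 * π p.1 p.2 * (F (extTraj σ) * g p.1 p.2) =
      F (extTraj σ) * ∑ s, w s * actionAvg π g s := by
    simp only [Fintype.sum_prod_type, actionAvg, mul_sum]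
    exact sum_congr rfl fun _ _ => sum_congr rfl fun _ _ => by ring
  simp only [hw, hFσ, extTraj_snoc_self, hsum, hh]

lemma expVal_mul_apply_succ {m : ℕ} {F : (ℕ → S × A) → ℝ}
    (hF : DependsOnFirst (m + 1) F) (h : S → A → ℝ) :
    expVal d1 T π (m + 1 + 1) (fun τ => F τ * h (τ (m + 1)).1 (τ (m + 1)).2) =
      expVal d1 T π (m + 1) (fun τ => F τ * transOp T π h (τ m).1 (τ m).2) := by
  rw [expVal_succ, expVal]
  refine sum_congr rfl fun σ _ => congrArg _ ?_
  have hFσ (p : S × A) : F (extTraj (Fin.snoc σ p)) = F (extTraj σ) :=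
    hF _ _ fun u hu => extTraj_snoc_of_lt σ p hu
  simp only [stepW, extTraj_snoc_self, extTraj_snoc_of_lt σ _ (Nat.lt_succ_self m), hFσ,
    transOp, actionAvg, Fintype.sum_prod_type, mul_sum]
  exact sum_congr rfl fun _ _ => sum_congr rfl fun _ _ => by ring

lemma sum_dSA_succ_mul (m : ℕ) (f : S → A → ℝ) :
    ∑ p : S × A, dSA d1 T π (m + 1) p.1 p.2 * f p.1 p.2 =
      ∑ p : S × A, dSA d1 T π m p.1 p.2 * transOp T π f p.1 p.2 := by
  have h := expVal_mul_apply_succ (d1 := d1) (T := T) (π := π) (m := m) (F := fun _ => 1)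
    (fun _ _ _ => rfl) f
  simp only [one_mul] at h
  rw [← expVal_apply, ← expVal_apply, h]

end Markov

section ImportanceWeighting

variable {d1 : S → ℝ} {T : S → A → S → ℝ} {πb πe : S → A → ℝ}

lemma expVal_mul_prod_rho_mul (hπe : ∀ s a, 0 ≤ πe s a)
    (hsupp : ∀ s a, 0 < πe s a → 0 < πb s a) (m n : ℕ) (φ q : S → A → ℝ) :
    expVal d1 T πb (m + n + 1) (fun τ => φ (τ m).1 (τ m).2 *
        (∏ j ∈ range n, rho πb πe τ (m + j + 1)) * q (τ (m + n)).1 (τ (m + n)).2) =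
      ∑ p : S × A, dSA d1 T πb m p.1 p.2 * φ p.1 p.2 * (transOp T πe)^[n] q p.1 p.2 := by
  induction n generalizing q with
  | zero =>
    simpa [mul_assoc] using expVal_apply (d1 := d1) (T := T) (π := πb) m fun s a => φ s a * q s a
  | succ n ih =>
    have hF : DependsOnFirst (m + n + 1)
        fun τ => φ (τ m).1 (τ m).2 * ∏ j ∈ range n, rho πb πe τ (m + j + 1) := by
      intro τ τ' h
      refine congrArg₂ _ (by rw [h m (by omega)]) (prod_congr rfl fun j hj => ?_)
      simp only [mem_range] at hj
      simp only [rho, h (m + j + 1) (by omega)]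
    rw [Function.iterate_succ_apply, ← ih, ← transOp_ratio_mul hπe hsupp,
      ← expVal_mul_apply_succ hF, ← add_assoc]
    congr 1
    funext τ
    rw [prod_range_succ, rho]
    ring

lemma expVal_mul_actionAvg (hπbsum : ∀ s, ∑ a, πb s a = 1) (hπe : ∀ s a, 0 ≤ πe s a)
    (hsupp : ∀ s a, 0 < πe s a → 0 < πb s a) {k : ℕ} {F : (ℕ → S × A) → ℝ}
    (hF : DependsOnFirst k F) (q : S → A → ℝ) :
    expVal d1 T πb (k + 1) (fun τ => F τ * ∑ a, πe (τ k).1 a * q (τ k).1 a) =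
      expVal d1 T πb (k + 1) (fun τ => F τ * rho πb πe τ k * q (τ k).1 (τ k).2) := by
  have h := expVal_mul_apply_congr (d1 := d1) (T := T) hF
    (h := fun s _ => actionAvg πe q s) (h' := fun s a => πe s a / πb s a * q s a)
    (by rw [actionAvg_const hπbsum, actionAvg_ratio_mul hπe hsupp])
  simp only [mul_assoc]
  exact h

lemma expVal_prod_rho_mul_actionAvg (hπbsum : ∀ s, ∑ a, πb s a = 1)
    (hπe : ∀ s a, 0 ≤ πe s a) (hsupp : ∀ s a, 0 < πe s a → 0 < πb s a)
    (k : ℕ) (q : S → A → ℝ) :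
    expVal d1 T πb (k + 1)
        (fun τ => (∏ j ∈ range k, rho πb πe τ j) * ∑ a, πe (τ k).1 a * q (τ k).1 a) =
      expVal d1 T πb (k + 1)
        (fun τ => (∏ j ∈ range (k + 1), rho πb πe τ j) * q (τ k).1 (τ k).2) := by
  simp only [prod_range_succ]
  refine expVal_mul_actionAvg hπbsum hπe hsupp (fun τ τ' h => prod_congr rfl fun j hj => ?_) q
  simp only [rho, h j (mem_range.mp hj)]

lemma preP_eq_mul_prod_rho (hπe : ∀ s a, 0 ≤ πe s a)
    (hsupp : ∀ s a, 0 < πe s a → 0 < πb s a) (m : ℕ) (τ : ℕ → S × A) :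
    preP d1 T πe m τ = preP d1 T πb m τ * ∏ j ∈ range m, rho πb πe τ j := by
  rw [preP, preP, ← prod_mul_distrib]
  refine prod_congr rfl fun t _ => ?_
  cases t <;> simp only [stepW, rho, mul_assoc, mul_div_cancel_of_support hπe hsupp]

lemma dSA_eq_zero_of_dSA_eq_zero (hd1 : ∀ s, 0 ≤ d1 s) (hT : ∀ s a s', 0 ≤ T s a s')
    (hπb : ∀ s a, 0 ≤ πb s a) (hπe : ∀ s a, 0 ≤ πe s a)
    (hsupp : ∀ s a, 0 < πe s a → 0 < πb s a) {m : ℕ} {s : S} {a : A}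
    (h : dSA d1 T πb m s a = 0) : dSA d1 T πe m s a = 0 := by
  rw [dSA, expVal] at h ⊢
  have hterm := (sum_eq_zero_iff_of_nonneg fun σ _ =>
    mul_nonneg (preP_nonneg hd1 hT hπb _ _) (by split <;> norm_num)).mp h
  refine sum_eq_zero fun σ hσ => ?_
  rw [preP_eq_mul_prod_rho hπe hsupp, mul_right_comm, hterm σ hσ, zero_mul]

lemma sum_dSA_zero_ratio_mul (hπe : ∀ s a, 0 ≤ πe s a)
    (hsupp : ∀ s a, 0 < πe s a → 0 < πb s a) (g : S → A → ℝ) :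
    ∑ p : S × A, dSA d1 T πb 0 p.1 p.2 * (πe p.1 p.2 / πb p.1 p.2) * g p.1 p.2 =
      ∑ p : S × A, dSA d1 T πe 0 p.1 p.2 * g p.1 p.2 := by
  simp only [dSA_zero, mul_assoc, mul_div_cancel_of_support hπe hsupp]

end ImportanceWeighting

lemma summable_geom_mul_of_abs_le {γ : ℝ} (hγ0 : 0 ≤ γ) (hγ1 : γ < 1) {x : ℕ → ℝ} {C : ℝ}
    (hx : ∀ k, |x k| ≤ C) : Summable fun k => γ ^ k * x k := by
  refine Summable.of_norm_bounded ((summable_geometric_of_lt_one hγ0 hγ1).mul_left C)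
    fun k => ?_
  rw [Real.norm_eq_abs, abs_mul, abs_of_nonneg (pow_nonneg hγ0 k), mul_comm]
  exact mul_le_mul_of_nonneg_right (hx k) (pow_nonneg hγ0 k)

section Occupancy

variable {d1 : S → ℝ} {T : S → A → S → ℝ} {π πb πe : S → A → ℝ} {γ : ℝ}

lemma summable_geom_mul_dSA (hγ0 : 0 ≤ γ) (hγ1 : γ < 1)
    (hd1 : ∀ s, 0 ≤ d1 s) (hd1sum : ∑ s, d1 s = 1)
    (hT : ∀ s a s', 0 ≤ T s a s') (hTsum : ∀ s a, ∑ s', T s a s' = 1)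
    (hπ : ∀ s a, 0 ≤ π s a) (hπsum : ∀ s, ∑ a, π s a = 1) (s : S) (a : A) :
    Summable fun i => γ ^ i * dSA d1 T π i s a :=
  summable_geom_mul_of_abs_le hγ0 hγ1 fun i => abs_dSA_le_one hd1 hd1sum hT hTsum hπ hπsum i s a

lemma tsum_geom_mul_sum_dSA_mul (hγ0 : 0 ≤ γ) (hγ1 : γ < 1)
    (hd1 : ∀ s, 0 ≤ d1 s) (hd1sum : ∑ s, d1 s = 1)
    (hT : ∀ s a s', 0 ≤ T s a s') (hTsum : ∀ s a, ∑ s', T s a s' = 1)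
    (hπ : ∀ s a, 0 ≤ π s a) (hπsum : ∀ s, ∑ a, π s a = 1) (g : S → A → ℝ) :
    ∑' i, γ ^ i * ∑ p : S × A, dSA d1 T π i p.1 p.2 * g p.1 p.2 =
      ∑ p : S × A, (∑' i, γ ^ i * dSA d1 T π i p.1 p.2) * g p.1 p.2 := by
  simp only [mul_sum, ← mul_assoc]
  rw [Summable.tsum_finsetSum fun p _ =>
    (summable_geom_mul_dSA hγ0 hγ1 hd1 hd1sum hT hTsum hπ hπsum p.1 p.2).mul_right _]
  simp only [tsum_mul_right]

lemma dInf_div_mul_tsum (hγ0 : 0 ≤ γ) (hγ1 : γ < 1)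
    (hd1 : ∀ s, 0 ≤ d1 s) (hd1sum : ∑ s, d1 s = 1)
    (hT : ∀ s a s', 0 ≤ T s a s') (hTsum : ∀ s a, ∑ s', T s a s' = 1)
    (hπb : ∀ s a, 0 ≤ πb s a) (hπbsum : ∀ s, ∑ a, πb s a = 1) (hπe : ∀ s a, 0 ≤ πe s a)
    (hsupp : ∀ s a, 0 < πe s a → 0 < πb s a) (s : S) (a : A) :
    dInf d1 T πe γ s a / dInf d1 T πb γ s a * ∑' i, γ ^ i * dSA d1 T πb i s a =
      ∑' i, γ ^ i * dSA d1 T πe i s a := by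
  by_cases h : ∑' i, γ ^ i * dSA d1 T πb i s a = 0
  · have hnonneg (i : ℕ) : 0 ≤ γ ^ i * dSA d1 T πb i s a :=
      mul_nonneg (pow_nonneg hγ0 i) (dSA_nonneg hd1 hT hπb i s a)
    have hzero := (hasSum_zero_iff_of_nonneg hnonneg).mp
      (h ▸ (summable_geom_mul_dSA hγ0 hγ1 hd1 hd1sum hT hTsum hπb hπbsum s a).hasSum)
    rw [h, mul_zero, eq_comm]
    refine (tsum_congr fun i => ?_).trans tsum_zero
    rcases mul_eq_zero.mp (congrFun hzero i) with hγ | hd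
    · rw [hγ, zero_mul]
    · rw [dSA_eq_zero_of_dSA_eq_zero hd1 hT hπb hπe hsupp hd, mul_zero]
  · rw [dInf, dInf, mul_div_mul_left _ _ (sub_ne_zero.mpr hγ1.ne'), div_mul_cancel₀ _ h]

lemma tsum_geom_mul_sum_dSA_ratio_mul (hγ0 : 0 ≤ γ) (hγ1 : γ < 1)
    (hd1 : ∀ s, 0 ≤ d1 s) (hd1sum : ∑ s, d1 s = 1)
    (hT : ∀ s a s', 0 ≤ T s a s') (hTsum : ∀ s a, ∑ s', T s a s' = 1)
    (hπb : ∀ s a, 0 ≤ πb s a) (hπbsum : ∀ s, ∑ a, πb s a = 1)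
    (hπe : ∀ s a, 0 ≤ πe s a) (hπesum : ∀ s, ∑ a, πe s a = 1)
    (hsupp : ∀ s a, 0 < πe s a → 0 < πb s a) (f : S → A → ℝ) :
    ∑' i, γ ^ i * ∑ p : S × A, dSA d1 T πb i p.1 p.2 *
        (dInf d1 T πe γ p.1 p.2 / dInf d1 T πb γ p.1 p.2) * f p.1 p.2 =
      ∑' i, γ ^ i * ∑ p : S × A, dSA d1 T πe i p.1 p.2 * f p.1 p.2 := by
  simp only [mul_assoc]
  rw [tsum_geom_mul_sum_dSA_mul hγ0 hγ1 hd1 hd1sum hT hTsum hπb hπbsum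
      fun s a => dInf d1 T πe γ s a / dInf d1 T πb γ s a * f s a,
    tsum_geom_mul_sum_dSA_mul hγ0 hγ1 hd1 hd1sum hT hTsum hπe hπesum]
  refine sum_congr rfl fun p _ => ?_
  rw [← mul_assoc, mul_comm (∑' _, _),
    dInf_div_mul_tsum hγ0 hγ1 hd1 hd1sum hT hTsum hπb hπbsum hπe hsupp]

lemma tsum_geom_mul_sum_dSA_mul_eq (hγ0 : 0 ≤ γ) (hγ1 : γ < 1)
    (hd1 : ∀ s, 0 ≤ d1 s) (hd1sum : ∑ s, d1 s = 1)
    (hT : ∀ s a s', 0 ≤ T s a s') (hTsum : ∀ s a, ∑ s', T s a s' = 1)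
    (hπ : ∀ s a, 0 ≤ π s a) (hπsum : ∀ s, ∑ a, π s a = 1) (f : S → A → ℝ) :
    ∑' i, γ ^ i * ∑ p : S × A, dSA d1 T π i p.1 p.2 * f p.1 p.2 =
      ∑ p : S × A, dSA d1 T π 0 p.1 p.2 * f p.1 p.2 +
        γ * ∑' i, γ ^ i * ∑ p : S × A, dSA d1 T π i p.1 p.2 * transOp T π f p.1 p.2 := by
  obtain ⟨C, hC⟩ := Finite.exists_le fun p : S × A => |f p.1 p.2|
  have hsumm : Summable fun i => γ ^ i * ∑ p : S × A, dSA d1 T π i p.1 p.2 * f p.1 p.2 :=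
    summable_geom_mul_of_abs_le hγ0 hγ1 fun i => by
      rw [← expVal_apply]
      exact abs_expVal_le hd1 hd1sum hT hTsum hπ hπsum fun τ => hC (τ i)
  rw [hsumm.tsum_eq_zero_add, pow_zero, one_mul, ← tsum_mul_left]
  simp only [sum_dSA_succ_mul, pow_succ, mul_comm _ γ, mul_assoc]

end Occupancy

lemma tsum_eq_tsum_of_eq_of_tail {G : Type*} [AddCommGroup G] [TopologicalSpace G]
    [IsTopologicalAddGroup G] [T2Space G] {f g : ℕ → G} (n : ℕ) (hf : Summable f)
    (hg : Summable g) (hfront : ∀ k < n, f k = g k)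
    (htail : ∑' i, f (i + n) = g n + ∑' i, g (i + n + 1)) :
    ∑' k, f k = ∑' k, g k := by
  rw [← hf.sum_add_tsum_nat_add n, ← hg.sum_add_tsum_nat_add n,
    ((summable_nat_add_iff n).mpr hg).tsum_eq_zero_add,
    sum_congr rfl fun k hk => hfront k (mem_range.mp hk), htail, zero_add]
  simp only [Nat.add_right_comm _ 1 n]

section DoublyRobust

variable {d1 : S → ℝ} {T : S → A → S → ℝ} {πb πe : S → A → ℝ} {γ : ℝ} {n : ℕ}

lemma wDR_of_le {τ : ℕ → S × A} {m : ℕ} (hm : m ≤ n) :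
    wDR d1 T πb πe γ n τ m = ∏ j ∈ range m, rho πb πe τ j := by
  rcases eq_or_ne m 0 with rfl | h0
  · simp [wDR]
  · rw [wDR, if_neg h0, if_pos hm]

lemma wDR_add_succ (τ : ℕ → S × A) (i : ℕ) :
    wDR d1 T πb πe γ n τ (i + n + 1) =
      dInf d1 T πe γ (τ i).1 (τ i).2 / dInf d1 T πb γ (τ i).1 (τ i).2 *
        ∏ j ∈ range n, rho πb πe τ (i + j + 1) := by
  rw [wDR, if_neg (by omega), if_neg (by omega), show i + n + 1 - n - 1 = i by omega,
    show i + n + 1 - 1 = i + n by omega, show i + n + 1 - n = i + 1 by omega,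
    ← Ico_add_one_right_eq_Icc, prod_Ico_eq_prod_range, show i + n + 1 - (i + 1) = n by omega]
  simp only [Nat.add_right_comm i 1]

lemma exists_abs_wDR_le (d1 : S → ℝ) (T : S → A → S → ℝ) (πb πe : S → A → ℝ) (γ : ℝ)
    (n : ℕ) : ∃ W, ∀ τ m, |wDR d1 T πb πe γ n τ m| ≤ W := by
  obtain ⟨M, hM⟩ := Finite.exists_le fun p : S × A => |πe p.1 p.2 / πb p.1 p.2|
  obtain ⟨R, hR⟩ := Finite.exists_le fun p : S × A =>
    |dInf d1 T πe γ p.1 p.2 / dInf d1 T πb γ p.1 p.2|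
  have hM1 : 1 ≤ max M 1 ^ n := one_le_pow₀ (le_max_right _ _)
  have hprod (τ : ℕ → S × A) (s : Finset ℕ) (hs : #s ≤ n) :
      |∏ j ∈ s, rho πb πe τ j| ≤ max M 1 ^ n := by
    rw [abs_prod]
    calc ∏ j ∈ s, |rho πb πe τ j| ≤ ∏ _j ∈ s, max M 1 :=
          prod_le_prod (fun _ _ => abs_nonneg _) fun j _ => (hM (τ j)).trans (le_max_left _ _)
      _ = max M 1 ^ #s := prod_const _
      _ ≤ max M 1 ^ n := pow_le_pow_right₀ (le_max_right _ _) hs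
  refine ⟨max R 1 * max M 1 ^ n, fun τ m => ?_⟩
  unfold wDR
  split_ifs with h0 hle
  · rw [abs_one]
    exact one_le_mul_of_one_le_of_one_le (le_max_right _ _) hM1
  · exact (hprod τ _ (by simpa using hle)).trans
      (le_mul_of_one_le_left (by positivity) (le_max_right _ _))
  · rw [abs_mul]
    exact mul_le_mul ((hR _).trans (le_max_left _ _)) (hprod τ _ (by simp; omega))
      (abs_nonneg _) (by positivity)

lemma summable_geom_mul_expVal_wDR_mul (hγ0 : 0 ≤ γ) (hγ1 : γ < 1)
    (hd1 : ∀ s, 0 ≤ d1 s) (hd1sum : ∑ s, d1 s = 1)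
    (hT : ∀ s a s', 0 ≤ T s a s') (hTsum : ∀ s a, ∑ s', T s a s' = 1)
    (hπb : ∀ s a, 0 ≤ πb s a) (hπbsum : ∀ s, ∑ a, πb s a = 1) (u : ℕ → ℕ) (g : S → A → ℝ) :
    Summable fun k => γ ^ k * expVal d1 T πb (k + 1)
      (fun τ => wDR d1 T πb πe γ n τ (u k) * g (τ k).1 (τ k).2) := by
  obtain ⟨W, hW⟩ := exists_abs_wDR_le d1 T πb πe γ n
  obtain ⟨G, hG⟩ := Finite.exists_le fun p : S × A => |g p.1 p.2|
  have hW0 : 0 ≤ W := (abs_nonneg _).trans (hW (fun _ => default) 0)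
  refine summable_geom_mul_of_abs_le hγ0 hγ1 (C := W * G) fun k =>
    abs_expVal_le hd1 hd1sum hT hTsum hπb hπbsum fun τ => ?_
  rw [abs_mul]
  exact mul_le_mul (hW τ _) (hG (τ k)) (abs_nonneg _) hW0

lemma expVal_wDR_mul (hπe : ∀ s a, 0 ≤ πe s a) (hsupp : ∀ s a, 0 < πe s a → 0 < πb s a)
    (i : ℕ) (q : S → A → ℝ) :
    expVal d1 T πb (i + n + 1)
        (fun τ => wDR d1 T πb πe γ n τ (i + n + 1) * q (τ (i + n)).1 (τ (i + n)).2) =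
      ∑ p : S × A, dSA d1 T πb i p.1 p.2 *
        (dInf d1 T πe γ p.1 p.2 / dInf d1 T πb γ p.1 p.2) * (transOp T πe)^[n] q p.1 p.2 := by
  simp only [wDR_add_succ]
  exact expVal_mul_prod_rho_mul hπe hsupp i n
    (fun s a => dInf d1 T πe γ s a / dInf d1 T πb γ s a) q

lemma expVal_wDR_mul_actionAvg (hπbsum : ∀ s, ∑ a, πb s a = 1) (hπe : ∀ s a, 0 ≤ πe s a)
    (hsupp : ∀ s a, 0 < πe s a → 0 < πb s a) (i : ℕ) (q : S → A → ℝ) :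
    expVal d1 T πb (i + n + 1 + 1) (fun τ => wDR d1 T πb πe γ n τ (i + n + 1) *
        ∑ a, πe (τ (i + n + 1)).1 a * q (τ (i + n + 1)).1 a) =
      ∑ p : S × A, dSA d1 T πb i p.1 p.2 *
        (dInf d1 T πe γ p.1 p.2 / dInf d1 T πb γ p.1 p.2) *
          (transOp T πe)^[n + 1] q p.1 p.2 := by
  have hF : DependsOnFirst (i + n + 1) fun τ => wDR d1 T πb πe γ n τ (i + n + 1) := by
    intro τ τ' h
    dsimp only
    rw [wDR_add_succ, wDR_add_succ, h i (by omega)]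
    refine congrArg _ (prod_congr rfl fun j hj => ?_)
    simp only [mem_range] at hj
    simp only [rho, h (i + j + 1) (by omega)]
  rw [expVal_mul_actionAvg hπbsum hπe hsupp hF, ← expVal_mul_prod_rho_mul hπe hsupp i (n + 1)
    (fun s a => dInf d1 T πe γ s a / dInf d1 T πb γ s a) q, ← add_assoc]
  congr 1
  funext τ
  rw [wDR_add_succ, prod_range_succ]
  ring

lemma expVal_wDR_self_mul_actionAvg (hπbsum : ∀ s, ∑ a, πb s a = 1)
    (hπe : ∀ s a, 0 ≤ πe s a) (hsupp : ∀ s a, 0 < πe s a → 0 < πb s a) (q : S → A → ℝ) :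
    expVal d1 T πb (n + 1)
        (fun τ => wDR d1 T πb πe γ n τ n * ∑ a, πe (τ n).1 a * q (τ n).1 a) =
      ∑ p : S × A, dSA d1 T πe 0 p.1 p.2 * (transOp T πe)^[n] q p.1 p.2 := by
  have h := expVal_mul_prod_rho_mul (d1 := d1) (T := T) hπe hsupp 0 n
    (fun s a => πe s a / πb s a) q
  simp only [zero_add, sum_dSA_zero_ratio_mul hπe hsupp] at h
  rw [← h]
  simp only [wDR_of_le le_rfl]
  rw [expVal_prod_rho_mul_actionAvg hπbsum hπe hsupp]
  congr 1
  funext τ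
  rw [prod_range_succ', rho]
  ring

lemma tsum_geom_mul_sum_dSA_ratio_mul_eq (hγ0 : 0 ≤ γ) (hγ1 : γ < 1)
    (hd1 : ∀ s, 0 ≤ d1 s) (hd1sum : ∑ s, d1 s = 1)
    (hT : ∀ s a s', 0 ≤ T s a s') (hTsum : ∀ s a, ∑ s', T s a s' = 1)
    (hπb : ∀ s a, 0 ≤ πb s a) (hπbsum : ∀ s, ∑ a, πb s a = 1)
    (hπe : ∀ s a, 0 ≤ πe s a) (hπesum : ∀ s, ∑ a, πe s a = 1)
    (hsupp : ∀ s a, 0 < πe s a → 0 < πb s a) (f : S → A → ℝ) :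
    ∑' i, γ ^ i * ∑ p : S × A, dSA d1 T πb i p.1 p.2 *
        (dInf d1 T πe γ p.1 p.2 / dInf d1 T πb γ p.1 p.2) * f p.1 p.2 =
      ∑ p : S × A, dSA d1 T πe 0 p.1 p.2 * f p.1 p.2 +
        γ * ∑' i, γ ^ i * ∑ p : S × A, dSA d1 T πb i p.1 p.2 *
          (dInf d1 T πe γ p.1 p.2 / dInf d1 T πb γ p.1 p.2) * transOp T πe f p.1 p.2 := by
  simp only [tsum_geom_mul_sum_dSA_ratio_mul hγ0 hγ1 hd1 hd1sum hT hTsum hπb hπbsum hπe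
    hπesum hsupp]
  exact tsum_geom_mul_sum_dSA_mul_eq hγ0 hγ1 hd1 hd1sum hT hTsum hπe hπesum f

end DoublyRobust

/-- shift lemma for doubly-robust weights: for any `n ≥ 0` and
any (automatically bounded) `q : S × A → ℝ`,
`E[Σ_(t=1)^∞ w(t,n) γ^(t-1) q(S_t,A_t)]
  = E[Σ_(t=1)^∞ w(t-1,n) γ^(t-1) Σ_a π_e(a|S_t) q(S_t,a)]`
(series reindexed by `t = k + 1`, 0-indexed coordinates; `wDR` encodes `w(·,n)`). -/
theorem dr_shift_lemma
    (d1 : S → ℝ) (T : S → A → S → ℝ) (πb πe : S → A → ℝ)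
    (γ : ℝ) (n : ℕ) (q : S → A → ℝ)
    (hd1 : ∀ s, 0 ≤ d1 s) (hd1sum : ∑ s, d1 s = 1)
    (hT : ∀ s a s', 0 ≤ T s a s') (hTsum : ∀ s a, ∑ s', T s a s' = 1)
    (hπb : ∀ s a, 0 ≤ πb s a) (hπbsum : ∀ s, ∑ a, πb s a = 1)
    (hπe : ∀ s a, 0 ≤ πe s a) (hπesum : ∀ s, ∑ a, πe s a = 1)
    (hγ0 : 0 ≤ γ) (hγ1 : γ < 1)
    (hsupp : ∀ s a, 0 < πe s a → 0 < πb s a) :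
    (∑' k : ℕ, γ ^ k * expVal d1 T πb (k + 1)
        (fun τ => wDR d1 T πb πe γ n τ (k + 1) * q (τ k).1 (τ k).2))
      = ∑' k : ℕ, γ ^ k * expVal d1 T πb (k + 1)
          (fun τ => wDR d1 T πb πe γ n τ k *
            ∑ a : A, πe (τ k).1 a * q (τ k).1 a) := by
  refine tsum_eq_tsum_of_eq_of_tail n
    (summable_geom_mul_expVal_wDR_mul hγ0 hγ1 hd1 hd1sum hT hTsum hπb hπbsum (· + 1) q)
    (summable_geom_mul_expVal_wDR_mul hγ0 hγ1 hd1 hd1sum hT hTsum hπb hπbsum id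
      fun s _ => ∑ a, πe s a * q s a) (fun k hk => ?_) ?_
  · simp only [wDR_of_le hk, wDR_of_le hk.le]
    rw [expVal_prod_rho_mul_actionAvg hπbsum hπe hsupp]
  · have hflow := tsum_geom_mul_sum_dSA_ratio_mul_eq hγ0 hγ1 hd1 hd1sum hT hTsum hπb hπbsum
      hπe hπesum hsupp ((transOp T πe)^[n] q)
    rw [← Function.iterate_succ_apply' (transOp T πe)] at hflow
    simp only [expVal_wDR_mul hπe hsupp, expVal_wDR_mul_actionAvg hπbsum hπe hsupp,
      expVal_wDR_self_mul_actionAvg hπbsum hπe hsupp]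
    have hpow (m : ℕ) (x : ℕ → ℝ) : ∑' i, γ ^ (i + m) * x i = γ ^ m * ∑' i, γ ^ i * x i := by
      rw [← tsum_mul_left]
      exact tsum_congr fun i => by ring
    simp only [add_assoc _ n 1, hpow, hflow]
    ring
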